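/- Let P and Q be probability measures on ℝ, let 0 < α < 1, let G be the cumulative distribution function of Q, and let q_lo, q_hi ∈ ℝ satisfy G(q_lo) = α/2 and G(q_hi) = 1 − α/2, with G continuous at q_lo. Then P([q_lo, q_hi]) ≥ 1 − α − TV(P,Q), where TV(P,Q) = sup_B |P(B) − Q(B)| is the total variation distance with the supremum over all Borel sets B of ℝ. -/

import Mathlib

open MeasureTheory

/-- Total variation distance between two measures: the supremum over all
measurable sets `B` of `|P(B) − Q(B)|`. -/
noncomputable def totalVariation {Ω : Type*} [MeasurableSpace Ω]
    (P Q : Measure Ω) : ℝ :=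
  ⨆ B : {B : Set Ω // MeasurableSet B}, |(P B.1).toReal - (Q B.1).toReal|

/-!
If `G` is continuous at `q_lo`, then `Q` has no atom there, so
`Q([q_lo, q_hi]) ≥ Q((-∞, q_hi]) - Q((-∞, q_lo)) = G(q_hi) - G(q_lo) = 1 - α`;
the total variation distance bounds the loss `Q([q_lo, q_hi]) - P([q_lo, q_hi])`.
-/

open ProbabilityTheory Set

theorem abs_measureReal_sub_le_totalVariation {Ω : Type*} [MeasurableSpace Ω]
    (P Q : Measure Ω) [IsFiniteMeasure P] [IsFiniteMeasure Q]
    {B : Set Ω} (hB : MeasurableSet B) :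
    |P.real B - Q.real B| ≤ totalVariation P Q := by
  have hbdd : BddAbove (range fun B : {B : Set Ω // MeasurableSet B} ↦
      |(P B.1).toReal - (Q B.1).toReal|) := by
    refine ⟨P.real univ + Q.real univ, ?_⟩
    rintro _ ⟨B, rfl⟩
    change |P.real B.1 - Q.real B.1| ≤ _
    have hP : P.real B.1 ≤ P.real univ := measureReal_mono (subset_univ _)
    have hQ : Q.real B.1 ≤ Q.real univ := measureReal_mono (subset_univ _)
    have hP₀ : 0 ≤ P.real B.1 := measureReal_nonneg
    have hQ₀ : 0 ≤ Q.real B.1 := measureReal_nonneg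
    exact abs_sub_le_iff.2 ⟨by linarith, by linarith⟩
  exact le_ciSup hbdd ⟨B, hB⟩

theorem measure_singleton_eq_zero_of_continuousAt_cdf (μ : Measure ℝ) [IsProbabilityMeasure μ]
    {a : ℝ} (h : ContinuousAt (cdf μ) a) : μ {a} = 0 := by
  rw [← measure_cdf μ, StieltjesFunction.measure_singleton,
    h.continuousWithinAt.leftLim_eq, sub_self, ENNReal.ofReal_zero]

theorem cdf_sub_cdf_le_measureReal_Icc (μ : Measure ℝ) [IsProbabilityMeasure μ]
    {a : ℝ} (h : ContinuousAt (cdf μ) a) (b : ℝ) :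
    cdf μ b - cdf μ a ≤ μ.real (Icc a b) := by
  have hatom : μ.real (Iio a) = μ.real (Iic a) :=
    measureReal_congr (Iio_ae_eq_Iic' (measure_singleton_eq_zero_of_continuousAt_cdf μ h))
  have hIcc : Icc a b = Iic b \ Iio a := by ext; simp
  rw [cdf_eq_real, cdf_eq_real, ← hatom, hIcc]
  exact le_measureReal_sdiff

theorem interval_coverage_lower_bound_general
    (P Q : Measure ℝ) [IsProbabilityMeasure P] [IsProbabilityMeasure Q]
    (G : ℝ → ℝ) (hG : ∀ x, G x = (Q (Set.Iic x)).toReal)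
    (α : ℝ)
    (q_lo q_hi : ℝ)
    (hlo : G q_lo = α / 2) (hhi : G q_hi = 1 - α / 2)
    (hcont : ContinuousAt G q_lo) :
    (P (Set.Icc q_lo q_hi)).toReal ≥ 1 - α - totalVariation P Q := by
  obtain rfl : G = cdf Q := funext fun x ↦ by rw [hG, cdf_eq_real, measureReal_def]
  have hQ : 1 - α ≤ Q.real (Icc q_lo q_hi) := by
    have := cdf_sub_cdf_le_measureReal_Icc Q hcont q_hi
    rw [hlo, hhi] at this
    linarith
  have hTV := abs_measureReal_sub_le_totalVariation P Q (measurableSet_Icc (a := q_lo) (b := q_hi))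
  have hloss := neg_abs_le (P.real (Icc q_lo q_hi) - Q.real (Icc q_lo q_hi))
  change P.real (Icc q_lo q_hi) ≥ _
  linarith

/-- If the CDF `G` of `Q` satisfies `G(q_lo) = α/2` and `G(q_hi) = 1 − α/2`
with `G` continuous at `q_lo`, then `P([q_lo, q_hi]) ≥ 1 − α − TV(P,Q)`. -/
theorem interval_coverage_lower_bound
    (P Q : Measure ℝ) [IsProbabilityMeasure P] [IsProbabilityMeasure Q]
    (G : ℝ → ℝ) (hG : ∀ x, G x = (Q (Set.Iic x)).toReal)
    (α : ℝ) (hα0 : 0 < α) (hα1 : α < 1)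
    (q_lo q_hi : ℝ)
    (hlo : G q_lo = α / 2) (hhi : G q_hi = 1 - α / 2)
    (hcont : ContinuousAt G q_lo) :
    (P (Set.Icc q_lo q_hi)).toReal ≥ 1 - α - totalVariation P Q :=
  interval_coverage_lower_bound_general P Q G hG α q_lo q_hi hlo hhi hcont
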